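/- On the 33-hole English solitaire board, if the initial position is the full board minus one hole at (x₀,y₀) and the final position is a single peg at (x₁,y₁), then x₀ ≡ x₁ (mod 3) and y₀ ≡ y₁ (mod 3). -/

import Mathlib

/-- The four orthogonal unit directions. -/
def dirs : Finset (ℤ × ℤ) := {(1,0), (-1,0), (0,1), (0,-1)}

/-- `(A, B, C)` is a jump triple on board `T`: three collinear adjacent holes,
with `B = A + d` and `C = A + 2d` for a unit direction `d`. -/
def IsJumpTriple (T : Finset (ℤ × ℤ)) (A B C : ℤ × ℤ) : Prop :=
  A ∈ T ∧ B ∈ T ∧ C ∈ T ∧ ∃ d ∈ dirs, B = A + d ∧ C = A + d + d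

/-- A single peg-solitaire jump: the peg at `A` jumps over the peg at `B`
into the empty hole `C`, removing the peg at `B`. -/
def Jump (T : Finset (ℤ × ℤ)) (P Q : Finset (ℤ × ℤ)) : Prop :=
  ∃ A B C, IsJumpTriple T A B C ∧ A ∈ P ∧ B ∈ P ∧ C ∉ P ∧
    Q = (P \ {A, B}) ∪ {C}

/-- The 33-hole English solitaire board. -/
noncomputable def englishBoard : Finset (ℤ × ℤ) :=
  (Finset.Icc (0:ℤ) 6 ×ˢ Finset.Icc (0:ℤ) 6).filter
    (fun p => (2 ≤ p.1 ∧ p.1 ≤ 4) ∨ (2 ≤ p.2 ∧ p.2 ≤ 4))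

/-!
Weight each hole `p` by `kleinWeight (ℓ p)`, where `ℓ p` is `x + y` or `x - y` mod 3 and
`kleinWeight` sends the three residues to the three nonzero elements of the Klein four-group.
A jump moves along a line on which `ℓ` runs through all three residues, and these weights
sum to zero, so the total weight of the pegs is invariant. The full English board has weight
zero, so the starting position has the weight of the vacancy and the final one that of the
survivor; injectivity of `kleinWeight` then gives `x + y` and `x - y` mod 3, hence `x` and
`y` mod 3.
-/

open Finset

theorem sum_eq_of_jump {M : Type*} [AddCommMonoid M] {T P Q : Finset (ℤ × ℤ)}
    (c : ℤ × ℤ → M) (hc : ∀ A B C, IsJumpTriple T A B C → c A + c B = c C)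
    (h : Jump T P Q) : ∑ p ∈ Q, c p = ∑ p ∈ P, c p := by
  obtain ⟨A, B, C, hABC, hA, hB, hC, rfl⟩ := h
  obtain ⟨-, -, -, d, hd, rfl, -⟩ := id hABC
  have hAB : A ≠ A + d := by
    intro h
    have hd0 : d = 0 := by simpa using h
    exact absurd (hd0 ▸ hd) (by decide)
  have hC_notMem : C ∉ P \ {A, A + d} := fun h => hC (mem_sdiff.1 h).1
  have hsub : {A, A + d} ⊆ P := insert_subset hA (singleton_subset_iff.2 hB)
  rw [sum_union (disjoint_singleton_right.2 hC_notMem), sum_singleton, ← hc _ _ _ hABC,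
    ← sum_pair hAB, sum_sdiff hsub]

theorem sum_eq_of_reflTransGen_jump {M : Type*} [AddCommMonoid M] {T P Q : Finset (ℤ × ℤ)}
    (c : ℤ × ℤ → M) (hc : ∀ A B C, IsJumpTriple T A B C → c A + c B = c C)
    (h : Relation.ReflTransGen (Jump T) P Q) : ∑ p ∈ Q, c p = ∑ p ∈ P, c p := by
  induction h with
  | refl => rfl
  | tail _ hjump ih => exact (sum_eq_of_jump c hc hjump).trans ih

def kleinWeight : ZMod 3 → ZMod 2 × ZMod 2 := ![(1, 0), (0, 1), (1, 1)]

theorem kleinWeight_injective : Function.Injective kleinWeight := by decide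

theorem kleinWeight_add_add (a d : ZMod 3) (hd : d ≠ 0) :
    kleinWeight a + kleinWeight (a + d) = kleinWeight (a + d + d) := by
  revert a d; decide

def sumMod3 : ℤ × ℤ →+ ZMod 3 :=
  AddMonoidHom.mk' (fun p => ((p.1 + p.2 : ℤ) : ZMod 3)) fun p q => by
    simp only [Prod.fst_add, Prod.snd_add]; push_cast; ring

def diffMod3 : ℤ × ℤ →+ ZMod 3 :=
  AddMonoidHom.mk' (fun p => ((p.1 - p.2 : ℤ) : ZMod 3)) fun p q => by
    simp only [Prod.fst_add, Prod.snd_add]; push_cast; ring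

theorem sum_kleinWeight_sumMod3 : ∑ p ∈ englishBoard, kleinWeight (sumMod3 p) = 0 := by
  decide

theorem sum_kleinWeight_diffMod3 : ∑ p ∈ englishBoard, kleinWeight (diffMod3 p) = 0 := by
  decide

theorem sumMod3_ne_zero_of_mem_dirs : ∀ d ∈ dirs, sumMod3 d ≠ 0 := by
  decide

theorem diffMod3_ne_zero_of_mem_dirs : ∀ d ∈ dirs, diffMod3 d ≠ 0 := by
  decide

theorem eq_of_reflTransGen_jump_singleton {T : Finset (ℤ × ℤ)} (ℓ : ℤ × ℤ →+ ZMod 3)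
    (hℓ : ∀ d ∈ dirs, ℓ d ≠ 0) (hT : ∑ p ∈ T, kleinWeight (ℓ p) = 0) {v z : ℤ × ℤ}
    (hv : v ∈ T) (h : Relation.ReflTransGen (Jump T) (T \ {v}) {z}) : ℓ v = ℓ z := by
  have hc : ∀ A B C, IsJumpTriple T A B C →
      kleinWeight (ℓ A) + kleinWeight (ℓ B) = kleinWeight (ℓ C) := by
    rintro A B C ⟨-, -, -, d, hd, rfl, rfl⟩
    simpa only [map_add] using kleinWeight_add_add (ℓ A) (ℓ d) (hℓ d hd)
  have hz := sum_eq_of_reflTransGen_jump _ hc h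
  rw [sum_singleton, sdiff_singleton_eq_erase] at hz
  have hzv : kleinWeight (ℓ z) + kleinWeight (ℓ v) = 0 := by
    rw [hz, sum_erase_add _ _ hv, hT]
  exact kleinWeight_injective (CharTwo.add_eq_zero.mp hzv).symm

theorem stmt_8_general (x₀ y₀ x₁ y₁ : ℤ)
    (h₀ : (x₀, y₀) ∈ englishBoard)
    (h : Relation.ReflTransGen (Jump englishBoard)
      (englishBoard \ {(x₀, y₀)}) {(x₁, y₁)}) :
    x₀ % 3 = x₁ % 3 ∧ y₀ % 3 = y₁ % 3 := by
  have hsum : (x₀ + y₀) % 3 = (x₁ + y₁) % 3 := (ZMod.intCast_eq_intCast_iff' _ _ 3).mp <|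
    eq_of_reflTransGen_jump_singleton sumMod3 sumMod3_ne_zero_of_mem_dirs
      sum_kleinWeight_sumMod3 h₀ h
  have hdiff : (x₀ - y₀) % 3 = (x₁ - y₁) % 3 := (ZMod.intCast_eq_intCast_iff' _ _ 3).mp <|
    eq_of_reflTransGen_jump_singleton diffMod3 diffMod3_ne_zero_of_mem_dirs
      sum_kleinWeight_diffMod3 h₀ h
  omega

/-- on the English board, a single-vacancy to single-survivor play
forces the vacancy and the survivor to be congruent coordinatewise mod 3. -/
theorem stmt_8 (x₀ y₀ x₁ y₁ : ℤ)
    (h₀ : (x₀, y₀) ∈ englishBoard) (h₁ : (x₁, y₁) ∈ englishBoard)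
    (h : Relation.ReflTransGen (Jump englishBoard)
      (englishBoard \ {(x₀, y₀)}) {(x₁, y₁)}) :
    x₀ % 3 = x₁ % 3 ∧ y₀ % 3 = y₁ % 3 :=
  stmt_8_general x₀ y₀ x₁ y₁ h₀ h
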